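/- Value of the (m,k)-equivariant Gromov radius on the ball and cylinder: for integers 1 ≤ k ≤ m ≤ n, one has sup{ r > 0 : there exists a symplectic ℝ^k-embedding of B^{2m}(r) into Z^{2n} } = 1, and likewise sup{ r > 0 : there exists a symplectic ℝ^k-embedding of B^{2m}(r) into B^{2n}(1) } = 1. -/

import Mathlib

/-!
Statement 1: Value of the (m,k)-equivariant Gromov radius on the ball and cylinder.
For integers 1 ≤ k ≤ m ≤ n:
sup{ r > 0 : B^{2m}(r) symplectically ℝ^k-embeds into Z^{2n} } = 1 and
sup{ r > 0 : B^{2m}(r) symplectically ℝ^k-embeds into B^{2n}(1) } = 1.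
-/

noncomputable section

/-- The standard symplectic form on `ℂ^N`: the imaginary part of the Hermitian inner
product (conjugate-linear in the first argument). -/
def symplForm {N : ℕ} (u v : EuclideanSpace ℂ (Fin N)) : ℝ :=
  (inner ℂ u v : ℂ).im

/-- The standard action of `ℝ^k` on `ℂ^m` (for `k ≤ m`): rotation of the first `k`
coordinates, `φ(t,z) = (e^{2it₁}z₁, …, e^{2it_k}z_k, z_{k+1}, …, z_m)`. -/
def stdAction (k : ℕ) {m : ℕ} (t : Fin k → ℝ) (z : EuclideanSpace ℂ (Fin m)) :
    EuclideanSpace ℂ (Fin m) :=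
  WithLp.toLp 2 (fun i => if h : (i : ℕ) < k then
    Complex.exp ((2 * t ⟨i, h⟩ : ℝ) * Complex.I) * z i
  else z i)

/-- The open cylinder `Z^{2n} = {z ∈ ℂ^n : |z₁| < 1}`. -/
def cylinder (n : ℕ) : Set (EuclideanSpace ℂ (Fin n)) :=
  {z | ∀ i : Fin n, (i : ℕ) = 0 → ‖z i‖ < 1}

/-- There exists a symplectic `ℝ^k`-embedding of the ball `B^{2m}(r)` into the set
`V ⊆ ℂ^n` (with the standard `ℝ^k`-actions on source and target). -/
def HasEquivEmbedding (k m n : ℕ) (r : ℝ) (V : Set (EuclideanSpace ℂ (Fin n))) : Prop :=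
  ∃ ρ : EuclideanSpace ℂ (Fin m) → EuclideanSpace ℂ (Fin n),
    ContDiffOn ℝ (⊤ : ℕ∞) ρ (Metric.ball 0 r) ∧
    Set.InjOn ρ (Metric.ball 0 r) ∧
    Set.MapsTo ρ (Metric.ball 0 r) V ∧
    (∀ z ∈ Metric.ball (0 : EuclideanSpace ℂ (Fin m)) r,
      ∀ u v : EuclideanSpace ℂ (Fin m),
        symplForm (fderiv ℝ ρ z u) (fderiv ℝ ρ z v) = symplForm u v) ∧
    ∃ Λ : (Fin k → ℝ) ≃ₗ[ℝ] (Fin k → ℝ),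
      ∀ (t : Fin k → ℝ), ∀ z ∈ Metric.ball (0 : EuclideanSpace ℂ (Fin m)) r,
        ρ (stdAction k t z) = stdAction k (Λ t) (ρ z)

open Complex Metric Finset ContinuousLinearMap
namespace EqG
abbrev E (N : ℕ) := EuclideanSpace ℂ (Fin N)
def toLp (N : ℕ) : (Fin N → ℂ) →L[ℝ] E N :=
  (PiLp.continuousLinearEquiv 2 ℝ (fun _ : Fin N => ℂ)).symm.toContinuousLinearMap
@[simp] lemma toLp_apply {N : ℕ} (x : Fin N → ℂ) (i : Fin N) : toLp N x i = x i := rfl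
def projC {N : ℕ} (i : Fin N) : E N →L[ℝ] ℂ :=
  (EuclideanSpace.proj i).restrictScalars ℝ
@[simp] lemma projC_apply {N : ℕ} (i : Fin N) (z : E N) : projC i z = z i := rfl
def nsqD (a : ℂ) : ℂ →L[ℝ] ℝ :=
  (2 * a.re) • Complex.reCLM + (2 * a.im) • Complex.imCLM
@[simp] lemma nsqD_apply (a v : ℂ) : nsqD a v = 2 * a.re * v.re + 2 * a.im * v.im := by
  simp [nsqD]
lemma hasFDerivAt_normSq (a : ℂ) : HasFDerivAt Complex.normSq (nsqD a) a := by
  have h : HasFDerivAt (fun z : ℂ => z.re * z.re + z.im * z.im)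
      ((a.re • Complex.reCLM + a.re • Complex.reCLM) +
        (a.im • Complex.imCLM + a.im • Complex.imCLM)) a :=
    ((Complex.reCLM.hasFDerivAt.mul Complex.reCLM.hasFDerivAt).add
      (Complex.imCLM.hasFDerivAt.mul Complex.imCLM.hasFDerivAt))
  have he : (fun z : ℂ => z.re * z.re + z.im * z.im) = Complex.normSq := by
    funext z; simp [Complex.normSq_apply]
  rw [he] at h
  convert h using 1
  ext v
  simp [nsqD]
  ring
def rotGen (k : ℕ) {N : ℕ} (w : E N) : (Fin k → ℝ) →L[ℝ] E N :=
  (toLp N).comp (ContinuousLinearMap.pi fun i : Fin N =>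
    if h : (i : ℕ) < k then
      (Complex.I * w i) • (Complex.ofRealCLM.comp ((2 : ℝ) • ContinuousLinearMap.proj ⟨i, h⟩))
    else 0)
lemma rotGen_apply {k N : ℕ} (w : E N) (s : Fin k → ℝ) (i : Fin N) :
    rotGen k w s i = if h : (i : ℕ) < k then ((2 * s ⟨i, h⟩ : ℝ) : ℂ) * Complex.I * w i else 0 := by
  simp only [rotGen, ContinuousLinearMap.comp_apply, toLp_apply, ContinuousLinearMap.pi_apply]
  split_ifs with h
  · simp [smul_eq_mul]; ring
  · simp

/-- the momentum-type function Σ ξ_j |w_{j}|² -/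
def mu (k : ℕ) {N : ℕ} (hkN : k ≤ N) (ξ : Fin k → ℝ) (w : E N) : ℝ :=
  ∑ j : Fin k, ξ j * Complex.normSq (w (Fin.castLE hkN j))

def Dmu (k : ℕ) {N : ℕ} (hkN : k ≤ N) (ξ : Fin k → ℝ) (w : E N) : E N →L[ℝ] ℝ :=
  ∑ j : Fin k, ξ j • ((nsqD (w (Fin.castLE hkN j))).comp (projC (Fin.castLE hkN j)))

lemma hasFDerivAt_mu {k N : ℕ} (hkN : k ≤ N) (ξ : Fin k → ℝ) (w : E N) :
    HasFDerivAt (mu k hkN ξ) (Dmu k hkN ξ w) w := by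
  apply HasFDerivAt.fun_sum
  intro j _
  have h1 : HasFDerivAt (fun w : E N => Complex.normSq (w (Fin.castLE hkN j)))
      ((nsqD (w (Fin.castLE hkN j))).comp (projC (Fin.castLE hkN j))) w :=
    (hasFDerivAt_normSq _).comp w (projC (Fin.castLE hkN j)).hasFDerivAt
  exact h1.const_smul (ξ j)

/-- the key pointwise identity: the differential of `mu ξ` is minus the symplectic
pairing with the infinitesimal action `rotGen · ξ`. -/
lemma Dmu_eq_symplForm {k N : ℕ} (hkN : k ≤ N) (ξ : Fin k → ℝ) (w : E N) (v : E N) :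
    Dmu k hkN ξ w v = - symplForm (rotGen k w ξ) v := by
  have hs : symplForm (rotGen k w ξ) v
      = ∑ i : Fin N, ((starRingEnd ℂ) (rotGen k w ξ i) * v i).im := by
    simp only [symplForm, PiLp.inner_apply, RCLike.inner_apply', Complex.im_sum]
  rw [hs]
  have : ∀ i : Fin N, ((starRingEnd ℂ) (rotGen k w ξ i) * v i).im
      = if h : (i : ℕ) < k then -(2 * ξ ⟨i, h⟩ * ((starRingEnd ℂ) (w i) * v i).re) else 0 := by
    intro i
    rw [rotGen_apply]
    split_ifs with h
    · simp only [map_mul, Complex.conj_I, Complex.conj_ofReal]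
      have : (((2 * ξ ⟨i, h⟩ : ℝ) : ℂ) * (-Complex.I) * (starRingEnd ℂ) (w i) * v i) =
          ((2 * ξ ⟨i, h⟩ : ℝ) : ℂ) * (-Complex.I) * ((starRingEnd ℂ) (w i) * v i) := by ring
      rw [mul_assoc]
      simp only [Complex.mul_im, Complex.mul_re, Complex.neg_re, Complex.neg_im,
        Complex.I_re, Complex.I_im, Complex.ofReal_re, Complex.ofReal_im,
        Complex.conj_re, Complex.conj_im]
      ring
    · simp
  rw [Finset.sum_congr rfl (fun i _ => this i)]
  have hR : ∑ i : Fin N, (if h : (i : ℕ) < k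
        then -(2 * ξ ⟨i, h⟩ * ((starRingEnd ℂ) (w i) * v i).re) else 0)
      = ∑ x ∈ Finset.range N, (if h : x < k
        then -(2 * ξ ⟨x, h⟩ *
          ((starRingEnd ℂ) (w ⟨x, lt_of_lt_of_le h hkN⟩) * v ⟨x, lt_of_lt_of_le h hkN⟩).re)
        else 0) := by
    rw [← Fin.sum_univ_eq_sum_range]
  rw [hR, ← Finset.sum_subset (Finset.range_subset_range.2 hkN) (by
      intro x _ hx
      rw [Finset.mem_range] at hx
      simp [hx]), ← Fin.sum_univ_eq_sum_range]
  rw [← Finset.sum_neg_distrib]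
  simp only [Dmu, ContinuousLinearMap.sum_apply, ContinuousLinearMap.smul_apply,
    ContinuousLinearMap.comp_apply, projC_apply, nsqD_apply, smul_eq_mul]
  apply Finset.sum_congr rfl
  intro j _
  rw [dif_pos j.isLt]
  have hj : (⟨(j : ℕ), lt_of_lt_of_le j.isLt hkN⟩ : Fin N) = Fin.castLE hkN j := rfl
  have hj2 : (⟨(j : ℕ), j.isLt⟩ : Fin k) = j := rfl
  rw [hj, hj2, Complex.mul_re, Complex.conj_re, Complex.conj_im]
  ring


def scaleCLM {N : ℕ} (c : Fin N → ℂ) : E N →L[ℝ] E N :=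
  (toLp N).comp (ContinuousLinearMap.pi fun i : Fin N => c i • projC i)

@[simp] lemma scaleCLM_apply {N : ℕ} (c : Fin N → ℂ) (z : E N) (i : Fin N) :
    scaleCLM c z i = c i * z i := by
  simp [scaleCLM, smul_eq_mul]

def rotc (k : ℕ) {N : ℕ} (t : Fin k → ℝ) : Fin N → ℂ :=
  fun i => if h : (i : ℕ) < k then Complex.exp ((2 * t ⟨i, h⟩ : ℝ) * Complex.I) else 1

lemma stdAction_eq {k N : ℕ} (t : Fin k → ℝ) (z : E N) :
    stdAction k t z = scaleCLM (rotc k t) z := by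
  ext i
  simp only [stdAction, PiLp.toLp_apply, scaleCLM_apply, rotc]
  split_ifs with h
  · rfl
  · simp

@[simp] lemma stdAction_zero_t {k N : ℕ} (z : E N) : stdAction k (0 : Fin k → ℝ) z = z := by
  ext i; simp only [stdAction, PiLp.toLp_apply]; split_ifs with h <;> simp

@[simp] lemma stdAction_zero_z {k N : ℕ} (t : Fin k → ℝ) :
    stdAction k t (0 : E N) = 0 := by
  ext i; simp only [stdAction, PiLp.toLp_apply]
  split_ifs with h
  · show _ * (0 : E N) i = (0 : E N) i
    simp
  · rfl

lemma hasFDerivAt_curve {k N : ℕ} (z : E N) :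
    HasFDerivAt (fun t : Fin k → ℝ => stdAction k t z) (rotGen k z) 0 := by
  have hpi : HasFDerivAt (fun (t : Fin k → ℝ) (i : Fin N) =>
      if h : (i : ℕ) < k then Complex.exp ((2 * t ⟨i, h⟩ : ℝ) * Complex.I) * z i else z i)
      (ContinuousLinearMap.pi fun i : Fin N =>
        if h : (i : ℕ) < k then
          (Complex.I * z i) • (Complex.ofRealCLM.comp ((2 : ℝ) • ContinuousLinearMap.proj ⟨i, h⟩))
        else 0) 0 := by
    rw [hasFDerivAt_pi]
    intro i
    by_cases h : (i : ℕ) < k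
    · simp only [h, dif_pos]
      have h1 : HasFDerivAt (fun t : Fin k → ℝ => ((2 * t ⟨i, h⟩ : ℝ) * Complex.I : ℂ))
          (Complex.I • (Complex.ofRealCLM.comp ((2 : ℝ) • ContinuousLinearMap.proj ⟨i, h⟩)))
          0 := by
        have he : (fun t : Fin k → ℝ => ((2 * t ⟨i, h⟩ : ℝ) * Complex.I : ℂ))
            = fun t => (Complex.I • (Complex.ofRealCLM.comp
              ((2 : ℝ) • ContinuousLinearMap.proj (R := ℝ) (φ := fun _ : Fin k => ℝ) ⟨i, h⟩))) t := by
          funext t; simp [smul_eq_mul]; ring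
        rw [he]
        exact (ContinuousLinearMap.hasFDerivAt _)
      have h2 := (h1.cexp).mul_const (z i)
      convert h2 using 1
      · ext s
        simp [smul_eq_mul]
      · ext s
        simp [smul_eq_mul]
        ring
    · simp only [h, dif_neg]
      simpa using (hasFDerivAt_const (z i) (0 : Fin k → ℝ))
  exact ((toLp N).hasFDerivAt (x := fun i : Fin N =>
      if h : (i : ℕ) < k then Complex.exp ((2 * (0 : Fin k → ℝ) ⟨i, h⟩ : ℝ) * Complex.I) * z i
      else z i)).comp 0 hpi


section AuxC
open Real

lemma aux0 {c : ℝ} (h : ∀ τ : ℝ, Complex.exp (((2 * (τ * c) : ℝ) : ℂ) * Complex.I) = 1) :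
    c = 0 := by
  by_contra hc
  have h1 := h (π / (4 * c))
  have h2 : ((2 * (π / (4 * c) * c) : ℝ) : ℂ) = ((π / 2 : ℝ) : ℂ) := by
    norm_cast
    field_simp
    ring
  rw [h2] at h1
  have h3 : Complex.exp (((π / 2 : ℝ) : ℂ) * Complex.I) = Complex.I := by
    push_cast
    rw [Complex.exp_mul_I]
    simp
  rw [h3] at h1
  exact absurd h1 (by simp [Complex.ext_iff])

lemma aux1 {a : ℂ} {c : ℝ} (ha : a ≠ 0)
    (h : ∀ τ : ℝ, Complex.exp (((2 * (τ * c) : ℝ) : ℂ) * Complex.I) * a = a) : c = 0 := by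
  apply aux0
  intro τ
  have h1 := h τ
  have h2 : Complex.exp (((2 * (τ * c) : ℝ) : ℂ) * Complex.I) * a = 1 * a := by
    rw [one_mul]; exact h1
  exact mul_right_cancel₀ ha h2

lemma aux2 {a b : ℂ} {c : ℝ} (ha : a ≠ 0)
    (h : ∀ τ : ℝ, ((Real.cos (2 * τ) : ℝ) : ℂ) * a + ((Real.sin (2 * τ) : ℝ) : ℂ) * b
      = Complex.exp (((2 * (τ * c) : ℝ) : ℂ) * Complex.I) * a) :
    c = 1 ∨ c = -1 := by
  set u : ℂ := Complex.exp (((2 * (π / 4 * c) : ℝ) : ℂ) * Complex.I) with hu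
  have hb : b = u * a := by
    have h1 := h (π / 4)
    rw [show (2 : ℝ) * (π / 4) = π / 2 by ring] at h1
    rw [hu, show ((2 * (π/4 * c) : ℝ) : ℂ) = 2 * (↑π/4 * ↑c) by push_cast; ring]
    simpa [Real.cos_pi_div_two, Real.sin_pi_div_two] using h1
  have hu2 : u ^ 2 = -1 := by
    have h2 := h (π / 2)
    rw [show (2 : ℝ) * (π / 2) = π by ring] at h2
    simp only [Real.cos_pi, Real.sin_pi] at h2
    have h2' : Complex.exp (((2 * (π / 2 * c) : ℝ) : ℂ) * Complex.I) = -1 := by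
      have he : (((-1 : ℝ)) : ℂ) * a + ((0 : ℝ) : ℂ) * b = (-1) * a := by push_cast; ring
      rw [he] at h2
      exact (mul_right_cancel₀ ha h2).symm
    rw [hu, sq, ← Complex.exp_add]
    rw [show ((((2 * (π / 4 * c) : ℝ)) : ℂ) * Complex.I + (((2 * (π / 4 * c) : ℝ)) : ℂ) * Complex.I)
      = (((2 * (π / 2 * c) : ℝ)) : ℂ) * Complex.I by push_cast; ring]
    exact h2'
  have hcases : u = Complex.I ∨ u = -Complex.I := by
    have hz : (u - Complex.I) * (u + Complex.I) = 0 := by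
      have : u ^ 2 + 1 = 0 := by rw [hu2]; ring
      linear_combination this - (Complex.I_sq + 1) * 1 + (Complex.I_sq - Complex.I_sq)
    rcases mul_eq_zero.mp hz with h' | h'
    · left; linear_combination h'
    · right; linear_combination h'
  have hmain : ∀ (d : ℝ), u = Complex.exp (((2 * ((π/4) * d) : ℝ) : ℂ) * Complex.I) →
      (∀ τ : ℝ, Complex.exp (((2 * (τ * d) : ℝ) : ℂ) * Complex.I)
        = Complex.exp (((2 * (τ * c) : ℝ) : ℂ) * Complex.I)) → c = d := by
    intro d _ hexp
    have : c - d = 0 := by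
      apply aux0
      intro τ
      have h5 := hexp τ
      rw [show (((2 * (τ * (c - d)) : ℝ) : ℂ) * Complex.I)
        = (((2 * (τ * c) : ℝ) : ℂ) * Complex.I) - (((2 * (τ * d) : ℝ) : ℂ) * Complex.I) by
          push_cast; ring, Complex.exp_sub, ← h5, div_self (Complex.exp_ne_zero _)]
    linarith
  rcases hcases with hui | hui
  · left
    apply hmain 1
    · rw [hui, show ((2 * (π/4 * (1:ℝ)) : ℝ) : ℂ) = ((π/2 : ℝ) : ℂ) by push_cast; ring]
      rw [Complex.exp_mul_I, ← Complex.ofReal_cos, ← Complex.ofReal_sin]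
      simp [Real.cos_pi_div_two, Real.sin_pi_div_two]
    · intro τ
      have hτ := h τ
      rw [hb, hui] at hτ
      have hL : ((Real.cos (2*τ) : ℝ) : ℂ) * a + ((Real.sin (2*τ) : ℝ) : ℂ) * (Complex.I * a)
          = Complex.exp (((2 * (τ * 1) : ℝ) : ℂ) * Complex.I) * a := by
        rw [show (((2 * (τ * 1) : ℝ)) : ℂ) = ((2*τ : ℝ) : ℂ) by norm_num, Complex.exp_mul_I]
        push_cast
        ring
      rw [hL] at hτ
      exact mul_right_cancel₀ ha hτ
  · right
    apply hmain (-1)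
    · rw [hui, show ((2 * (π/4 * (-1:ℝ)) : ℝ) : ℂ) = ((-(π/2) : ℝ) : ℂ) by push_cast; ring]
      rw [Complex.exp_mul_I, ← Complex.ofReal_cos, ← Complex.ofReal_sin]
      simp [Real.cos_pi_div_two, Real.sin_pi_div_two, Real.cos_neg, Real.sin_neg]
    · intro τ
      have hτ := h τ
      rw [hb, hui] at hτ
      have hL : ((Real.cos (2*τ) : ℝ) : ℂ) * a + ((Real.sin (2*τ) : ℝ) : ℂ) * (-Complex.I * a)
          = Complex.exp (((2 * (τ * (-1)) : ℝ) : ℂ) * Complex.I) * a := by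
        rw [show (((2 * (τ * (-1)) : ℝ)) : ℂ) * Complex.I = ((-(2*τ) : ℝ) : ℂ) * Complex.I by
          push_cast; ring, Complex.exp_mul_I]
        push_cast
        simp [Complex.cos_neg, Complex.sin_neg]
        ring
      rw [hL] at hτ
      exact mul_right_cancel₀ ha hτ

end AuxC

section Main

variable {k m n : ℕ} {r : ℝ} {ρ : E m → E n} {Λ : (Fin k → ℝ) ≃ₗ[ℝ] (Fin k → ℝ)}

lemma mu_const (hkm : k ≤ m) (hkn : k ≤ n) (hr : 0 < r)
    (hρ : ContDiffOn ℝ (⊤ : ℕ∞) ρ (Metric.ball 0 r))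
    (hsymp : ∀ z ∈ Metric.ball (0 : E m) r, ∀ u v : E m,
      symplForm (fderiv ℝ ρ z u) (fderiv ℝ ρ z v) = symplForm u v)
    (hequiv : ∀ (t : Fin k → ℝ), ∀ z ∈ Metric.ball (0 : E m) r,
      ρ (stdAction k t z) = stdAction k (Λ t) (ρ z))
    (ξ η : Fin k → ℝ) (hη : Λ η = ξ) :
    ∀ z ∈ Metric.ball (0 : E m) r, mu k hkn ξ (ρ z) - mu k hkm η z = mu k hkn ξ (ρ 0) := by
  have hdiff : ∀ z ∈ Metric.ball (0 : E m) r, DifferentiableAt ℝ ρ z := fun z hz =>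
    (hρ.contDiffAt (Metric.isOpen_ball.mem_nhds hz)).differentiableAt (by simp)
  set ΛC : (Fin k → ℝ) →L[ℝ] (Fin k → ℝ) := (Λ : (Fin k → ℝ) →ₗ[ℝ] (Fin k → ℝ)).toContinuousLinearMap with hΛC
  have hD2 : ∀ z ∈ Metric.ball (0 : E m) r,
      fderiv ℝ ρ z (rotGen k z η) = rotGen k (ρ z) ξ := by
    intro z hz
    have hρz : HasFDerivAt ρ (fderiv ℝ ρ z) (stdAction k (0 : Fin k → ℝ) z) := by
      rw [stdAction_zero_t]; exact (hdiff z hz).hasFDerivAt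
    have hL : HasFDerivAt (fun t : Fin k → ℝ => ρ (stdAction k t z))
        ((fderiv ℝ ρ z).comp (rotGen k z)) 0 := hρz.comp 0 (hasFDerivAt_curve z)
    have hcl : HasFDerivAt (fun t : Fin k → ℝ => stdAction k (ΛC t) (ρ z))
        ((rotGen k (ρ z)).comp ΛC) 0 := by
      have h0 : HasFDerivAt (fun s : Fin k → ℝ => stdAction k s (ρ z)) (rotGen k (ρ z))
          (ΛC 0) := by rw [map_zero]; exact hasFDerivAt_curve (ρ z)
      exact h0.comp 0 ΛC.hasFDerivAt
    have hfun : (fun t : Fin k → ℝ => ρ (stdAction k t z))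
        = (fun t : Fin k → ℝ => stdAction k (ΛC t) (ρ z)) := by
      funext t
      exact hequiv t z hz
    rw [hfun] at hL
    have := hL.unique hcl
    have h3 := congrArg (fun (T : (Fin k → ℝ) →L[ℝ] E n) => T η) this
    simp only [ContinuousLinearMap.comp_apply] at h3
    have h4 : ΛC η = ξ := hη
    rw [h4] at h3
    exact h3
  intro z hz
  have hg : ∀ x ∈ Metric.ball (0 : E m) r,
      HasFDerivWithinAt (fun z => mu k hkn ξ (ρ z) - mu k hkm η z)
        (0 : E m →L[ℝ] ℝ) (Metric.ball 0 r) x := by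
    intro x hx
    have h1 : HasFDerivAt (fun z => mu k hkn ξ (ρ z))
        ((Dmu k hkn ξ (ρ x)).comp (fderiv ℝ ρ x)) x :=
      (hasFDerivAt_mu hkn ξ (ρ x)).comp x (hdiff x hx).hasFDerivAt
    have h2 := (h1.sub (hasFDerivAt_mu hkm η x))
    have h0 : (Dmu k hkn ξ (ρ x)).comp (fderiv ℝ ρ x) - Dmu k hkm η x = 0 := by
      ext v
      simp only [ContinuousLinearMap.sub_apply, ContinuousLinearMap.comp_apply,
        ContinuousLinearMap.zero_apply]
      rw [Dmu_eq_symplForm, Dmu_eq_symplForm, ← hD2 x hx, hsymp x hx]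
      ring
    rw [h0] at h2
    exact h2.hasFDerivWithinAt
  have h0m : (0 : E m) ∈ Metric.ball (0 : E m) r := by simp [hr]
  have hle := Convex.norm_image_sub_le_of_norm_hasFDerivWithin_le (C := 0) hg
    (fun x _ => norm_zero.le) (convex_ball (0 : E m) r) h0m hz
  have h5 : mu k hkn ξ (ρ z) - mu k hkm η z - (mu k hkn ξ (ρ 0) - mu k hkm η 0) = 0 := by
    simpa using hle
  have h6 := sub_eq_zero.mp h5
  rw [h6]
  have h7 : mu k hkm η (0 : E m) = 0 := by
    simp [mu]
  rw [h7, sub_zero]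


lemma rho_zero (hr : 0 < r)
    (hequiv : ∀ (t : Fin k → ℝ), ∀ z ∈ Metric.ball (0 : E m) r,
      ρ (stdAction k t z) = stdAction k (Λ t) (ρ z)) :
    ∀ i : Fin n, (i : ℕ) < k → ρ 0 i = 0 := by
  intro i hik
  have h0m : (0 : E m) ∈ Metric.ball (0 : E m) r := by simp [hr]
  have h1 := hequiv (Λ.symm (Pi.single ⟨i, hik⟩ (Real.pi / 2))) 0 h0m
  rw [stdAction_zero_z, LinearEquiv.apply_symm_apply] at h1
  have h2 := congrArg (fun w : E n => w i) h1
  simp only [stdAction, PiLp.toLp_apply, hik, dif_pos] at h2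
  have h3 : (⟨(i : ℕ), hik⟩ : Fin k) = ⟨(i : ℕ), hik⟩ := rfl
  rw [Pi.single_eq_same] at h2
  have h4 : ((2 * (Real.pi / 2) : ℝ) : ℂ) * Complex.I = ((Real.pi : ℝ) : ℂ) * Complex.I := by
    push_cast; ring
  rw [h4, Complex.exp_pi_mul_I] at h2
  have : ρ 0 i + ρ 0 i = 0 := by linear_combination h2
  exact add_self_eq_zero.mp this

lemma claimA (hk0 : 0 < k) (hkm : k ≤ m) (hr : 0 < r)
    (hρ : ContDiffOn ℝ (⊤ : ℕ∞) ρ (Metric.ball 0 r))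
    (hsymp : ∀ z ∈ Metric.ball (0 : E m) r, ∀ u v : E m,
      symplForm (fderiv ℝ ρ z u) (fderiv ℝ ρ z v) = symplForm u v)
    (hequiv : ∀ (t : Fin k → ℝ), ∀ z ∈ Metric.ball (0 : E m) r,
      ρ (stdAction k t z) = stdAction k (Λ t) (ρ z)) :
    ∃ (j₀ : Fin k) (ε : ℝ), (ε = 1 ∨ ε = -1) ∧
      Λ (ε • (Pi.single j₀ 1 : Fin k → ℝ)) = (Pi.single (⟨0, hk0⟩ : Fin k) 1 : Fin k → ℝ) := by
  have h0m : (0 : E m) ∈ Metric.ball (0 : E m) r := by simp [hr]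
  have hρ0 : DifferentiableAt ℝ ρ 0 :=
    (hρ.contDiffAt (Metric.isOpen_ball.mem_nhds h0m)).differentiableAt (by simp)
  set T := fderiv ℝ ρ 0 with hT
  have hTA : ∀ (t : Fin k → ℝ) (x : E m), T (stdAction k t x) = stdAction k (Λ t) (T x) := by
    intro t x
    have h1 : HasFDerivAt (fun z : E m => ρ (stdAction k t z))
        (T.comp (scaleCLM (rotc k t))) 0 := by
      have hfe : (fun z : E m => ρ (stdAction k t z))
          = (fun z : E m => ρ (scaleCLM (rotc k t) z)) := by
        funext z; rw [stdAction_eq]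
      rw [hfe]
      have hρ1 : HasFDerivAt ρ T (scaleCLM (rotc k t) 0) := by
        rw [map_zero]; exact hρ0.hasFDerivAt
      exact hρ1.comp 0 (scaleCLM (rotc k t)).hasFDerivAt
    have h2 : HasFDerivAt (fun z : E m => stdAction k (Λ t) (ρ z))
        ((scaleCLM (rotc k (Λ t))).comp T) 0 := by
      have hfe : (fun z : E m => stdAction k (Λ t) (ρ z))
          = (fun z : E m => scaleCLM (rotc k (Λ t)) (ρ z)) := by
        funext z; rw [stdAction_eq]
      rw [hfe]
      exact (scaleCLM (rotc k (Λ t))).hasFDerivAt.comp 0 hρ0.hasFDerivAt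
    have hev : (fun z : E m => ρ (stdAction k t z))
        =ᶠ[nhds (0 : E m)] (fun z : E m => stdAction k (Λ t) (ρ z)) :=
      Filter.eventuallyEq_of_mem (Metric.isOpen_ball.mem_nhds h0m)
        (fun z hz => hequiv t z hz)
    have h1' := h1.congr_of_eventuallyEq hev.symm
    have hCLM := h1'.unique h2
    have h3 := congrArg (fun (S : E m →L[ℝ] E n) => S x) hCLM
    simp only [ContinuousLinearMap.comp_apply] at h3
    rw [← stdAction_eq, ← stdAction_eq] at h3
    exact h3
  have hsymp0 := hsymp 0 h0m
  have hperj : ∀ j : Fin k, ∃ (i : Fin k) (ε : ℝ), (ε = 1 ∨ ε = -1) ∧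
      ∀ t : Fin k → ℝ, Λ t i = ε * t j := by
    intro j
    set u : E m := EuclideanSpace.single (Fin.castLE hkm j) 1 with hu
    have hui : ∀ i : Fin m, u i = if i = Fin.castLE hkm j then 1 else 0 := by
      intro i; rw [hu, EuclideanSpace.single_apply]
    have hAct : ∀ t : Fin k → ℝ,
        stdAction k t u = Complex.exp (((2 * t j : ℝ) : ℂ) * Complex.I) • u := by
      intro t
      ext i
      have hs : (Complex.exp (((2 * t j : ℝ) : ℂ) * Complex.I) • u) i
          = Complex.exp (((2 * t j : ℝ) : ℂ) * Complex.I) * u i := rfl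
      rw [hs]
      simp only [stdAction, PiLp.toLp_apply]
      by_cases hij : i = Fin.castLE hkm j
      · subst hij
        have hlt : ((Fin.castLE hkm j : Fin m) : ℕ) < k := j.isLt
        rw [dif_pos hlt]
        congr 2
      · rw [hui i, if_neg hij]
        split_ifs with hl
        · ring
        · ring
    have hkeyC : ∀ (t : Fin k → ℝ) (i : Fin n),
        ((Real.cos (2 * t j) : ℝ) : ℂ) * (T u) i + ((Real.sin (2 * t j) : ℝ) : ℂ)
          * (T (Complex.I • u)) i = stdAction k (Λ t) (T u) i := by
      intro t i
      have h1 := hTA t u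
      rw [hAct t] at h1
      have hexp : Complex.exp (((2 * t j : ℝ) : ℂ) * Complex.I) • u
          = (Real.cos (2 * t j)) • u + (Real.sin (2 * t j)) • (Complex.I • u) := by
        rw [Complex.exp_mul_I, ← Complex.ofReal_cos, ← Complex.ofReal_sin]
        rw [add_smul, mul_smul, Complex.coe_smul, Complex.coe_smul]
      rw [hexp, map_add, map_smul, map_smul] at h1
      have h2 := congrArg (fun w : E n => w i) h1
      have h3 : (Real.cos (2 * t j) • T u + Real.sin (2 * t j) • T (Complex.I • u)) i
          = ((Real.cos (2 * t j) : ℝ) : ℂ) * (T u) i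
            + ((Real.sin (2 * t j) : ℝ) : ℂ) * (T (Complex.I • u)) i := by
        show Real.cos (2 * t j) • (T u) i + Real.sin (2 * t j) • (T (Complex.I • u)) i = _
        rw [Complex.real_smul, Complex.real_smul]
      rw [← h3]
      exact h2
    have hval : symplForm u (Complex.I • u) = 1 := by
      simp only [symplForm, PiLp.inner_apply, RCLike.inner_apply']
      have hterm : ∀ i : Fin m, (starRingEnd ℂ) (u i) * (Complex.I • u) i
          = if i = Fin.castLE hkm j then Complex.I else 0 := by
        intro i
        have hsm : (Complex.I • u) i = Complex.I * u i := rfl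
        rw [hsm, hui i]
        split_ifs with h
        · simp
        · simp
      rw [Finset.sum_congr rfl (fun i _ => hterm i)]
      simp
    have hTu : T u ≠ 0 := by
      intro h0
      have hs := hsymp0 u (Complex.I • u)
      rw [← hT, h0] at hs
      rw [hval] at hs
      have : symplForm 0 (T (Complex.I • u)) = 0 := by
        simp [symplForm, inner_zero_left]
      rw [this] at hs
      norm_num at hs
    have hge : ∀ i : Fin n, ¬((i : ℕ) < k) → T u i = 0 := by
      intro i hik
      have h1 := hkeyC (Pi.single j (Real.pi/2)) i
      rw [Pi.single_eq_same] at h1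
      rw [show (2:ℝ) * (Real.pi/2) = Real.pi by ring, Real.cos_pi, Real.sin_pi] at h1
      simp only [stdAction, PiLp.toLp_apply, hik, dif_neg] at h1
      push_cast at h1
      have : T u i + T u i = 0 := by linear_combination -h1
      exact add_self_eq_zero.mp this
    obtain ⟨i, hi⟩ : ∃ i : Fin n, T u i ≠ 0 := by
      by_contra hc
      push_neg at hc
      exact hTu (by ext i; exact hc i)
    have hik : (i : ℕ) < k := by
      by_contra hc
      exact hi (hge i hc)
    have hcol : ∀ l : Fin k, l ≠ j → Λ (Pi.single l 1) ⟨(i : ℕ), hik⟩ = 0 := by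
      intro l hl
      apply aux1 hi
      intro τ
      have h1 := hkeyC (τ • (Pi.single l 1 : Fin k → ℝ)) i
      have htj : (τ • (Pi.single l 1 : Fin k → ℝ)) j = 0 := by
        have hz : (Pi.single l 1 : Fin k → ℝ) j = 0 := by
          rw [Pi.single_apply, if_neg (fun h => hl h.symm)]
        show τ * (Pi.single l 1 : Fin k → ℝ) j = 0
        rw [hz, mul_zero]
      rw [htj, mul_zero, Real.cos_zero, Real.sin_zero] at h1
      simp only [stdAction, PiLp.toLp_apply, hik, dif_pos] at h1
      rw [show Λ (τ • (Pi.single l 1 : Fin k → ℝ)) = τ • Λ (Pi.single l 1) from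
        Λ.map_smul τ _] at h1
      have hv : (τ • Λ (Pi.single l 1)) ⟨(i:ℕ), hik⟩ = τ * Λ (Pi.single l 1) ⟨(i:ℕ), hik⟩ := rfl
      rw [hv] at h1
      push_cast at h1 ⊢
      linear_combination -h1
    have hdiag : Λ (Pi.single j 1) ⟨(i : ℕ), hik⟩ = 1 ∨
        Λ (Pi.single j 1) ⟨(i : ℕ), hik⟩ = -1 := by
      apply aux2 hi
      intro τ
      have h1 := hkeyC (τ • (Pi.single j 1 : Fin k → ℝ)) i
      have htj : (τ • (Pi.single j 1 : Fin k → ℝ)) j = τ := by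
        show τ * (Pi.single j 1 : Fin k → ℝ) j = τ
        rw [Pi.single_eq_same, mul_one]
      rw [htj] at h1
      simp only [stdAction, PiLp.toLp_apply, hik, dif_pos] at h1
      rw [show Λ (τ • (Pi.single j 1 : Fin k → ℝ)) = τ • Λ (Pi.single j 1) from
        Λ.map_smul τ _] at h1
      have hv : (τ • Λ (Pi.single j 1)) ⟨(i:ℕ), hik⟩ = τ * Λ (Pi.single j 1) ⟨(i:ℕ), hik⟩ := rfl
      rw [hv] at h1
      exact h1
    refine ⟨⟨(i : ℕ), hik⟩, Λ (Pi.single j 1) ⟨(i : ℕ), hik⟩, hdiag, ?_⟩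
    intro t
    have ht : t = ∑ l : Fin k, (Pi.single l (t l) : Fin k → ℝ) :=
      (Finset.univ_sum_single t).symm
    have hsingle : ∀ l : Fin k, (Pi.single l (t l) : Fin k → ℝ) = t l • (Pi.single l 1 : Fin k → ℝ) := by
      intro l
      funext x
      rw [Pi.single_apply]
      show _ = t l * (Pi.single l 1 : Fin k → ℝ) x
      rw [Pi.single_apply]
      split_ifs <;> ring
    calc Λ t ⟨(i:ℕ), hik⟩ = (∑ l : Fin k, t l • Λ (Pi.single l 1)) ⟨(i:ℕ), hik⟩ := by
          nth_rewrite 1 [ht]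
          rw [Finset.sum_congr rfl (fun l _ => hsingle l), map_sum,
            show (∑ x : Fin k, Λ (t x • (Pi.single x 1 : Fin k → ℝ)))
              = ∑ l : Fin k, t l • Λ (Pi.single l 1) from
              Finset.sum_congr rfl (fun l _ => Λ.map_smul (t l) _)]
      _ = ∑ l : Fin k, t l * Λ (Pi.single l 1) ⟨(i:ℕ), hik⟩ := by
          rw [Finset.sum_apply]
          rfl
      _ = Λ (Pi.single j 1) ⟨(i:ℕ), hik⟩ * t j := by
          rw [Finset.sum_eq_single j]
          · ring
          · intro l _ hl
            rw [hcol l hl, mul_zero]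
          · intro habs
            exact absurd (Finset.mem_univ j) habs
  choose g ε hpm hrow using hperj
  have hginj : Function.Injective g := by
    intro j j' hjj
    by_contra hne
    have h1 := hrow j (Pi.single j 1)
    have h2 := hrow j' (Pi.single j 1)
    rw [hjj, h2, Pi.single_eq_same, Pi.single_apply, if_neg (fun h => hne h.symm)] at h1
    rcases hpm j with h | h <;> rw [h] at h1 <;> norm_num at h1
  have hgsurj : Function.Surjective g := Finite.injective_iff_surjective.mp hginj
  obtain ⟨j₀, hj₀⟩ := hgsurj ⟨0, hk0⟩
  refine ⟨j₀, ε j₀, hpm j₀, ?_⟩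
  funext x
  obtain ⟨j, rfl⟩ := hgsurj x
  have hL : Λ (ε j₀ • (Pi.single j₀ 1 : Fin k → ℝ)) (g j)
      = ε j₀ * (ε j * (Pi.single j₀ 1 : Fin k → ℝ) j) := by
    rw [Λ.map_smul]
    have : (ε j₀ • Λ (Pi.single j₀ 1)) (g j) = ε j₀ * Λ (Pi.single j₀ 1) (g j) := rfl
    rw [this, hrow j (Pi.single j₀ 1)]
  rw [hL]
  by_cases hjj : j = j₀
  · subst hjj
    rw [Pi.single_eq_same, hj₀, Pi.single_eq_same, mul_one]
    rcases hpm j with h | h <;> rw [h] <;> norm_num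
  · rw [Pi.single_apply, if_neg hjj, mul_zero, mul_zero, Pi.single_apply,
      if_neg (fun h : g j = ⟨0, hk0⟩ => hjj (hginj (h.trans hj₀.symm)))]

lemma mu_single_left {N : ℕ} (hk0 : 0 < k) (hkN : k ≤ N) (w : E N) :
    mu k hkN (Pi.single (⟨0, hk0⟩ : Fin k) 1) w
      = Complex.normSq (w (Fin.castLE hkN ⟨0, hk0⟩)) := by
  rw [mu, Finset.sum_eq_single (⟨0, hk0⟩ : Fin k)]
  · rw [Pi.single_eq_same, one_mul]
  · intro l _ hl
    rw [Pi.single_apply, if_neg hl, zero_mul]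
  · intro habs
    exact absurd (Finset.mem_univ _) habs

lemma mu_single_eps {N : ℕ} (hkN : k ≤ N) (j₀ : Fin k) (ε : ℝ) (z : E N) :
    mu k hkN (ε • (Pi.single j₀ 1 : Fin k → ℝ)) z
      = ε * Complex.normSq (z (Fin.castLE hkN j₀)) := by
  rw [mu, Finset.sum_eq_single j₀]
  · have : (ε • (Pi.single j₀ 1 : Fin k → ℝ)) j₀ = ε * (Pi.single j₀ 1 : Fin k → ℝ) j₀ := rfl
    rw [this, Pi.single_eq_same, mul_one]
  · intro l _ hl
    have : (ε • (Pi.single j₀ 1 : Fin k → ℝ)) l = ε * (Pi.single j₀ 1 : Fin k → ℝ) l := rfl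
    rw [this, Pi.single_apply, if_neg hl, mul_zero, zero_mul]
  · intro habs
    exact absurd (Finset.mem_univ _) habs

lemma upper_bound {V : Set (E n)} (hk : 1 ≤ k) (hkm : k ≤ m) (hmn : m ≤ n) {r : ℝ} (hr : 0 < r)
    (hV : ∀ w ∈ V, Complex.normSq (w (Fin.castLE (hkm.trans hmn) (⟨0, hk⟩ : Fin k))) < 1)
    (h : HasEquivEmbedding k m n r V) : r ≤ 1 := by
  obtain ⟨ρ, hρ, hinj, hmaps, hsymp, Λ, hequiv⟩ := h
  have hk0 : 0 < k := hk
  have hkn : k ≤ n := hkm.trans hmn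
  obtain ⟨j₀, ε, hpm, hΛ⟩ := claimA (Λ := Λ) hk0 hkm hr hρ hsymp hequiv
  have hmom := mu_const (Λ := Λ) hkm hkn hr hρ hsymp hequiv
    (Pi.single (⟨0, hk0⟩ : Fin k) 1) (ε • (Pi.single j₀ 1 : Fin k → ℝ)) hΛ
  have hρ00 : mu k hkn (Pi.single (⟨0, hk0⟩ : Fin k) 1) (ρ 0) = 0 := by
    rw [mu_single_left hk0 hkn, rho_zero (Λ := Λ) hr hequiv _ (by simpa using hk0)]
    simp
  have hkey : ∀ z ∈ Metric.ball (0 : E m) r,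
      Complex.normSq (ρ z (Fin.castLE hkn ⟨0, hk0⟩))
        = ε * Complex.normSq (z (Fin.castLE hkm j₀)) := by
    intro z hz
    have h1 := hmom z hz
    rw [hρ00, mu_single_left hk0 hkn, mu_single_eps hkm j₀ ε z] at h1
    linarith
  have hsmall : ∀ δ : ℝ, 0 < δ → δ < r → (ε * (δ * δ) = Complex.normSq
      (ρ (EuclideanSpace.single (Fin.castLE hkm j₀) (δ : ℂ)) (Fin.castLE hkn ⟨0, hk0⟩))
      ∧ Complex.normSq (ρ (EuclideanSpace.single (Fin.castLE hkm j₀) (δ : ℂ))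
        (Fin.castLE hkn ⟨0, hk0⟩)) < 1) := by
    intro δ hδ hδr
    have hmem : EuclideanSpace.single (Fin.castLE hkm j₀) (δ : ℂ) ∈ Metric.ball (0 : E m) r := by
      rw [mem_ball_zero_iff, EuclideanSpace.norm_single]
      simpa [abs_of_pos hδ] using hδr
    constructor
    · rw [hkey _ hmem, EuclideanSpace.single_apply, if_pos rfl, Complex.normSq_ofReal]
    · have := hV _ (hmaps hmem)
      convert this using 3
  have heps : ε = 1 := by
    rcases hpm with h1 | h1
    · exact h1
    · exfalso
      have h2 := (hsmall (r/2) (by linarith) (by linarith)).1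
      rw [h1] at h2
      nlinarith [Complex.normSq_nonneg
        (ρ (EuclideanSpace.single (Fin.castLE hkm j₀) ((r/2 : ℝ) : ℂ)) (Fin.castLE hkn ⟨0, hk0⟩))]
  by_contra hr1
  push_neg at hr1
  set δ := (1 + r) / 2 with hδdef
  have h2 := hsmall δ (by linarith) (by linarith)
  rw [heps, one_mul] at h2
  nlinarith [h2.1, h2.2]

lemma sum_ext {M : Type*} [AddCommMonoid M] (hmn : m ≤ n) (F : ℕ → M)
    (hF : ∀ x, m ≤ x → F x = 0) : ∑ i : Fin n, F ↑i = ∑ j : Fin m, F ↑j := by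
  rw [Fin.sum_univ_eq_sum_range, Fin.sum_univ_eq_sum_range,
    ← Finset.sum_subset (Finset.range_subset_range.2 hmn)]
  intro x _ hx
  exact hF x (by simpa using hx)

lemma abs_comp_le {N : ℕ} (x : E N) (i : Fin N) : ‖x i‖ ≤ ‖x‖ := by
  have h1 : ‖x i‖ ^ 2 ≤ ‖x‖ ^ 2 := by
    rw [EuclideanSpace.norm_eq, Real.sq_sqrt (Finset.sum_nonneg (fun j _ => sq_nonneg ‖x j‖))]
    exact Finset.single_le_sum (fun j _ => sq_nonneg ‖x j‖) (Finset.mem_univ i)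
  have h2 : ‖x i‖ ≤ ‖x‖ := by
    nlinarith [norm_nonneg (x i), norm_nonneg x]
  exact h2

def inclCLM (m n : ℕ) : E m →L[ℝ] E n :=
  (toLp n).comp (ContinuousLinearMap.pi fun i : Fin n =>
    if h : (i : ℕ) < m then projC ⟨(i : ℕ), h⟩ else 0)

lemma inclCLM_apply (z : E m) (i : Fin n) :
    inclCLM m n z i = if h : (i : ℕ) < m then z ⟨(i : ℕ), h⟩ else 0 := by
  simp only [inclCLM, ContinuousLinearMap.comp_apply, toLp_apply, ContinuousLinearMap.pi_apply]
  split_ifs with h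
  · rfl
  · rfl

lemma inclCLM_norm (hmn : m ≤ n) (z : E m) : ‖inclCLM m n z‖ = ‖z‖ := by
  rw [EuclideanSpace.norm_eq, EuclideanSpace.norm_eq]
  congr 1
  set F : ℕ → ℝ := fun x => if h : x < m then ‖z ⟨x, h⟩‖ ^ 2 else 0 with hF
  have h1 : ∀ i : Fin n, ‖inclCLM m n z i‖ ^ 2 = F ↑i := by
    intro i
    rw [inclCLM_apply, hF]
    by_cases h : (i : ℕ) < m <;> simp [h]
  calc ∑ i : Fin n, ‖inclCLM m n z i‖ ^ 2 = ∑ i : Fin n, F ↑i :=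
        Finset.sum_congr rfl (fun i _ => h1 i)
    _ = ∑ j : Fin m, F ↑j := sum_ext hmn F (fun x hx => by rw [hF]; simp [not_lt.2 hx])
    _ = ∑ j : Fin m, ‖z j‖ ^ 2 := Finset.sum_congr rfl (fun j _ => by
        rw [hF]; simp [j.isLt])

lemma inclCLM_inner (hmn : m ≤ n) (u v : E m) :
    (inner ℂ (inclCLM m n u) (inclCLM m n v) : ℂ) = inner ℂ u v := by
  rw [PiLp.inner_apply, PiLp.inner_apply]
  set F : ℕ → ℂ := fun x => if h : x < m then (inner ℂ (u ⟨x, h⟩) (v ⟨x, h⟩) : ℂ) else 0 with hF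
  have h1 : ∀ i : Fin n, (inner ℂ (inclCLM m n u i) (inclCLM m n v i) : ℂ) = F ↑i := by
    intro i
    rw [inclCLM_apply, inclCLM_apply, hF]
    by_cases h : (i : ℕ) < m <;> simp [h]
  calc ∑ i : Fin n, (inner ℂ (inclCLM m n u i) (inclCLM m n v i) : ℂ) = ∑ i : Fin n, F ↑i :=
        Finset.sum_congr rfl (fun i _ => h1 i)
    _ = ∑ j : Fin m, F ↑j := sum_ext hmn F (fun x hx => by rw [hF]; simp [not_lt.2 hx])
    _ = ∑ j : Fin m, (inner ℂ (u j) (v j) : ℂ) := Finset.sum_congr rfl (fun j _ => by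
        rw [hF]; simp [j.isLt])

lemma incl_equivariant (hk : 1 ≤ k) (hkm : k ≤ m) (hmn : m ≤ n) (t : Fin k → ℝ) (z : E m) :
    inclCLM m n (stdAction k t z) = stdAction k t (inclCLM m n z) := by
  ext i
  rw [inclCLM_apply]
  by_cases him : (i : ℕ) < m
  · rw [dif_pos him]
    simp only [stdAction, PiLp.toLp_apply]
    by_cases hik : (i : ℕ) < k
    · rw [dif_pos hik, dif_pos hik, inclCLM_apply, dif_pos him]
    · rw [dif_neg hik, dif_neg hik, inclCLM_apply, dif_pos him]
  · rw [dif_neg him]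
    simp only [stdAction, PiLp.toLp_apply]
    have hik : ¬ (i : ℕ) < k := fun h => him (lt_of_lt_of_le h hkm)
    rw [dif_neg hik, inclCLM_apply, dif_neg him]

lemma lower_bound (hk : 1 ≤ k) (hkm : k ≤ m) (hmn : m ≤ n) {V : Set (E n)}
    (hV : ∀ z : E m, ‖z‖ < 1 → inclCLM m n z ∈ V) :
    HasEquivEmbedding k m n 1 V := by
  refine ⟨⇑(inclCLM m n), (inclCLM m n).contDiff.contDiffOn, ?_, ?_, ?_, ?_⟩
  · intro z _ z' _ hzz
    ext j
    have := congrArg (fun w : E n => w (Fin.castLE hmn j)) hzz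
    rw [inclCLM_apply, inclCLM_apply] at this
    simpa using this
  · intro z hz
    rw [mem_ball_zero_iff] at hz
    exact hV z hz
  · intro z _ u v
    have hf : fderiv ℝ (⇑(inclCLM m n)) z = inclCLM m n :=
      (inclCLM m n).fderiv
    rw [hf]
    show (inner ℂ (inclCLM m n u) (inclCLM m n v) : ℂ).im = (inner ℂ u v : ℂ).im
    rw [inclCLM_inner hmn]
  · refine ⟨LinearEquiv.refl ℝ (Fin k → ℝ), fun t z _ => ?_⟩
    exact incl_equivariant hk hkm hmn t z

end Main
end EqG

/-- The `(m,k)`-equivariant Gromov radius of the cylinder `Z^{2n}` and of the unit ball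
`B^{2n}` are both equal to `1`. -/
theorem equivariant_gromov_radius_ball_cylinder
    (k m n : ℕ) (hk : 1 ≤ k) (hkm : k ≤ m) (hmn : m ≤ n) :
    sSup {r : ℝ | 0 < r ∧ HasEquivEmbedding k m n r (cylinder n)} = 1 ∧
    sSup {r : ℝ | 0 < r ∧
      HasEquivEmbedding k m n r (Metric.ball (0 : EuclideanSpace ℂ (Fin n)) 1)} = 1 := by
  set i₀ : Fin n := Fin.castLE (hkm.trans hmn) (⟨0, hk⟩ : Fin k) with hi₀
  have hVc : ∀ w ∈ cylinder n, Complex.normSq (w i₀) < 1 := by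
    intro w hw
    have h1 := hw i₀ rfl
    nlinarith [norm_nonneg (w i₀), Complex.sq_norm (w i₀)]
  have hVb : ∀ w ∈ Metric.ball (0 : EuclideanSpace ℂ (Fin n)) 1,
      Complex.normSq (w i₀) < 1 := by
    intro w hw
    rw [mem_ball_zero_iff] at hw
    have h1 := EqG.abs_comp_le w i₀
    nlinarith [norm_nonneg (w i₀), Complex.sq_norm (w i₀), norm_nonneg w]
  have h1c : (1 : ℝ) ∈ {r : ℝ | 0 < r ∧ HasEquivEmbedding k m n r (cylinder n)} := by
    refine ⟨one_pos, EqG.lower_bound hk hkm hmn ?_⟩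
    intro z hz i hi0
    have him : (i : ℕ) < m := by rw [hi0]; exact lt_of_lt_of_le hk hkm
    rw [EqG.inclCLM_apply, dif_pos him]
    calc ‖z ⟨(i : ℕ), him⟩‖ ≤ ‖z‖ := EqG.abs_comp_le z _
      _ < 1 := hz
  have h1b : (1 : ℝ) ∈ {r : ℝ | 0 < r ∧
      HasEquivEmbedding k m n r (Metric.ball (0 : EuclideanSpace ℂ (Fin n)) 1)} := by
    refine ⟨one_pos, EqG.lower_bound hk hkm hmn ?_⟩
    intro z hz
    rw [mem_ball_zero_iff, EqG.inclCLM_norm hmn]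
    exact hz
  constructor
  · apply le_antisymm
    · exact csSup_le ⟨1, h1c⟩ (fun r hr => EqG.upper_bound hk hkm hmn hr.1 hVc hr.2)
    · exact le_csSup ⟨1, fun r hr => EqG.upper_bound hk hkm hmn hr.1 hVc hr.2⟩ h1c
  · apply le_antisymm
    · exact csSup_le ⟨1, h1b⟩ (fun r hr => EqG.upper_bound hk hkm hmn hr.1 hVb hr.2)
    · exact le_csSup ⟨1, fun r hr => EqG.upper_bound hk hkm hmn hr.1 hVb hr.2⟩ h1b
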